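/- arXiv:2106.12332 — 9 statements merged into one kernel-verified Lean document; each statement's English description precedes it below -/
import Mathlib

section
/- At the unique pure strategy Nash equilibrium of the mining game, miner i allocates resources x_i* = (1 - c_i/c*)/c*, where c* = (1/(n-1))·∑_{j=1}^n c_j, and the total allocated resources equal X* = 1/c*. That is, the vector (x_i*) satisfies the first-order optimality conditions: for each i, x_i* maximizes Π_i(x_i, x*_{-i}) over x_i ≥ 0. -/
open Finset

/-- Payoff of miner `i` in the mining game with costs `c` and allocations `x`
(total revenue normalized to 1). -/
noncomputable def payoff {n : ℕ} (c x : Fin n → ℝ) (i : Fin n) : ℝ :=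
  x i / (∑ j, x j) - c i * x i

/-- the allocation `x_i* = (1 - c_i/c*)/c*` (with `c* = (∑ c_j)/(n-1)`)
is a Nash equilibrium: total resources equal `1/c*` and each miner's allocation
maximizes their payoff over all nonnegative unilateral deviations. -/
theorem nash_equilibrium_allocation (n : ℕ) (hn : 2 ≤ n) (c : Fin n → ℝ)
    (hc : ∀ i, 0 < c i)
    (hpart : ∀ i, c i < (∑ j, c j) / ((n : ℝ) - 1))
    (xstar : Fin n → ℝ)
    (hx : ∀ i, xstar i =
      (1 - c i / ((∑ j, c j) / ((n : ℝ) - 1))) / ((∑ j, c j) / ((n : ℝ) - 1))) :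
    (∑ i, xstar i) = 1 / ((∑ j, c j) / ((n : ℝ) - 1)) ∧
    ∀ i : Fin n, ∀ y : ℝ, 0 ≤ y →
      payoff c (Function.update xstar i y) i ≤ payoff c xstar i := by
  have hn2 : (2:ℝ) ≤ (n:ℝ) := by exact_mod_cast hn
  have hn0 : (0:ℝ) < (n:ℝ) - 1 := by linarith
  set S := ∑ j, c j with hS
  have hSpos : 0 < S := Finset.sum_pos (fun i _ => hc i)
    ⟨⟨0, by omega⟩, mem_univ _⟩
  set b := S / ((n:ℝ) - 1) with hb
  have hbpos : 0 < b := div_pos hSpos hn0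
  have hbne : b ≠ 0 := hbpos.ne'
  have hsum : (∑ i, xstar i) = 1 / b := by
    have h0 : ∑ i, xstar i = (∑ i, (1 - c i / b)) / b := by
      rw [Finset.sum_div]
      exact Finset.sum_congr rfl (fun i _ => hx i)
    rw [h0]
    have h1 : ∑ i : Fin n, (1 - c i / b) = (n:ℝ) - S / b := by
      rw [Finset.sum_sub_distrib, ← Finset.sum_div]
      simp [hS, Finset.card_univ]
    have h2 : S / b = (n:ℝ) - 1 := by
      rw [hb]; field_simp
    rw [h1, h2]
    have h3 : (n:ℝ) - ((n:ℝ) - 1) = 1 := by ring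
    rw [h3]
  refine ⟨hsum, fun i y hy => ?_⟩
  have hci := hc i
  have hcib : c i < b := hpart i
  have hxi : xstar i = (1 - c i / b) / b := hx i
  have hxipos : 0 < xstar i := by
    rw [hxi]
    apply div_pos _ hbpos
    have : c i / b < 1 := (div_lt_one hbpos).2 hcib
    linarith
  have hR : (∑ j, xstar j) - xstar i = c i / b ^ 2 := by
    rw [hsum, hxi]; field_simp; ring_nf
  have hRpos : 0 < c i / b ^ 2 := div_pos hci (by positivity)
  have hsum_upd : ∑ j, Function.update xstar i y j = y + c i / b ^ 2 := by
    rw [Finset.sum_update_of_mem (Finset.mem_univ i)]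
    congr 1
    rw [Finset.sum_sdiff_eq_sub (Finset.subset_univ _), Finset.sum_singleton]
    exact hR
  have hyR : 0 < y + c i / b ^ 2 := by linarith
  have hkey : payoff c xstar i - payoff c (Function.update xstar i y) i
      = c i * (y - xstar i) ^ 2 / (y + c i / b ^ 2) := by
    unfold payoff
    rw [hsum_upd, hsum, Function.update_self, hxi]
    rw [eq_div_iff hyR.ne']
    field_simp
    ring
  have hpos : 0 ≤ c i * (y - xstar i) ^ 2 / (y + c i / b ^ 2) := by positivity
  linarith
end

section
/- If miner i deviates from the Nash equilibrium allocation x_i* to x_i* + Δ with Δ > 0 while all other miners play their equilibrium allocations, then miner i's own utility loss equals Δ²·c_i·c* / (1 + c*·Δ). -/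
open Finset

theorem Finset.sum_update_add_self {ι M : Type*} [Fintype ι] [DecidableEq ι] [AddCommMonoid M]
    (x : ι → M) (i : ι) (Δ : M) :
    ∑ j, Function.update x i (x i + Δ) j = ∑ j, x j + Δ := by
  rw [sum_update_of_mem (mem_univ i), sum_eq_add_sum_sdiff_singleton_of_mem (mem_univ i) x]
  abel

theorem sum_equilibrium_eq_one_div {ι : Type*} [Fintype ι] (c : ι → ℝ) {s : ℝ} (hs : s ≠ 0)
    (hsum : ∑ j, c j = s * (Fintype.card ι - 1)) :
    ∑ j, (1 - c j / s) / s = 1 / s := by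
  simp only [← sum_div, sum_sub_distrib, sum_const, card_univ, nsmul_eq_mul, mul_one, hsum]
  field_simp
  ring

theorem payoff_sub_payoff_update {n : ℕ} (c x : Fin n → ℝ) (i : Fin n) (Δ : ℝ) :
    payoff c x i - payoff c (Function.update x i (x i + Δ)) i
      = x i / ∑ j, x j - (x i + Δ) / (∑ j, x j + Δ) + c i * Δ := by
  simp only [payoff, sum_update_add_self, Function.update_self]
  ring

theorem deviator_own_loss_general (n : ℕ) (c : Fin n → ℝ)
    (hc : ∀ i, 0 < c i)
    (cstar : ℝ) (hcstar : cstar = (∑ j, c j) / ((n : ℝ) - 1))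
    (hpart : ∀ i, c i < cstar)
    (xstar : Fin n → ℝ) (hx : ∀ i, xstar i = (1 - c i / cstar) / cstar)
    (i : Fin n) (Δ : ℝ) (hΔ : 0 < Δ) :
    payoff c xstar i - payoff c (Function.update xstar i (xstar i + Δ)) i
      = Δ ^ 2 * c i * cstar / (1 + cstar * Δ) := by
  have hpos : 0 < cstar := (hc i).trans (hpart i)
  have hn : (n : ℝ) - 1 ≠ 0 := (div_ne_zero_iff.mp (hcstar ▸ hpos.ne')).2
  have hsum : ∑ j, c j = cstar * (Fintype.card (Fin n) - 1) := by
    rw [hcstar, Fintype.card_fin]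
    field_simp
  have htotal : ∑ j, xstar j = 1 / cstar := by
    simp only [hx, sum_equilibrium_eq_one_div c hpos.ne' hsum]
  rw [payoff_sub_payoff_update, htotal, hx i]
  field_simp
  ring

/-- the deviator's own utility loss when deviating from the Nash
equilibrium `x_i*` to `x_i* + Δ` equals `Δ² c_i c* / (1 + c* Δ)`. -/
theorem deviator_own_loss (n : ℕ) (hn : 2 ≤ n) (c : Fin n → ℝ)
    (hc : ∀ i, 0 < c i)
    (cstar : ℝ) (hcstar : cstar = (∑ j, c j) / ((n : ℝ) - 1))
    (hpart : ∀ i, c i < cstar)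
    (xstar : Fin n → ℝ) (hx : ∀ i, xstar i = (1 - c i / cstar) / cstar)
    (i : Fin n) (Δ : ℝ) (hΔ : 0 < Δ) :
    payoff c xstar i - payoff c (Function.update xstar i (xstar i + Δ)) i
      = Δ ^ 2 * c i * cstar / (1 + cstar * Δ) :=
  deviator_own_loss_general n c hc cstar hcstar hpart xstar hx i Δ hΔ
end

section
/- The aggregate griefing factor of the deviation x_i* + Δ (Δ > 0) from the Nash equilibrium equals GF_i = (∑_{j≠i} utility loss of j) / (utility loss of i) = 1/(c*·Δ) = (n−1)/(Δ·∑_{j=1}^n c_j). In particular, for Δ < 1/c*, the griefing factor exceeds 1, so the Nash equilibrium is griefable. -/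
/-! Raising `x_i` by `Δ` lowers every other miner's share `x_j / S` by the same factor
`1/S - 1/(S + Δ)`, while miner `i` additionally pays `c_i Δ`. So the others lose
`L = (S - x_i)(1/S - 1/(S + Δ))` in total, miner `i` loses `c_i Δ - L`, and at the equilibrium,
where `S = 1/c*` and `S - x_i* = c_i/c*²`, the ratio of the two is `1/(c* Δ)`. -/

open Finset

open Function

section Deviation

variable {n : ℕ} (c x : Fin n → ℝ) (i : Fin n) (Δ : ℝ)

noncomputable def utilityLoss (k : Fin n) : ℝ :=
  payoff c x k - payoff c (update x i (x i + Δ)) k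

noncomputable def griefingFactor : ℝ :=
  (∑ j ∈ univ.erase i, utilityLoss c x i Δ j) / utilityLoss c x i Δ i

theorem sum_update_add_self : ∑ j, update x i (x i + Δ) j = ∑ j, x j + Δ := by
  rw [sum_update_of_mem (mem_univ i), ← erase_eq, sum_erase_eq_sub (mem_univ i)]
  ring

theorem utilityLoss_of_ne {k : Fin n} (hk : k ≠ i) :
    utilityLoss c x i Δ k = x k * (1 / ∑ j, x j - 1 / (∑ j, x j + Δ)) := by
  rw [utilityLoss, payoff, payoff, sum_update_add_self, update_of_ne hk]
  ring

theorem sum_erase_utilityLoss :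
    ∑ j ∈ univ.erase i, utilityLoss c x i Δ j
      = (∑ j, x j - x i) * (1 / ∑ j, x j - 1 / (∑ j, x j + Δ)) := by
  rw [sum_congr rfl fun j hj => utilityLoss_of_ne c x i Δ (ne_of_mem_erase hj), ← sum_mul,
    sum_erase_eq_sub (mem_univ i)]

theorem utilityLoss_self (hS : ∑ j, x j ≠ 0) (hSΔ : ∑ j, x j + Δ ≠ 0) :
    utilityLoss c x i Δ i
      = c i * Δ - ∑ j ∈ univ.erase i, utilityLoss c x i Δ j := by
  rw [sum_erase_utilityLoss, utilityLoss, payoff, payoff, sum_update_add_self, update_self]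
  field_simp
  ring

end Deviation

theorem sum_eq_inv_of_equilibrium {n : ℕ} {c x : Fin n → ℝ} {cstar : ℝ} (hcstar : cstar ≠ 0)
    (hsum : ∑ j, c j = cstar * ((n : ℝ) - 1)) (hx : ∀ i, x i = (1 - c i / cstar) / cstar) :
    ∑ j, x j = 1 / cstar := by
  simp only [hx, ← sum_div, sum_sub_distrib, sum_const, card_univ, Fintype.card_fin,
    nsmul_eq_mul, mul_one, hsum]
  field_simp
  ring

theorem griefingFactor_of_equilibrium {n : ℕ} {c x : Fin n → ℝ} {cstar : ℝ} {i : Fin n} {Δ : ℝ}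
    (hci : c i ≠ 0) (hcstar : 0 < cstar) (hsum : ∑ j, c j = cstar * ((n : ℝ) - 1))
    (hx : ∀ i, x i = (1 - c i / cstar) / cstar) (hΔ : 0 < Δ) :
    griefingFactor c x i Δ = 1 / (cstar * Δ) := by
  have hS : ∑ j, x j = 1 / cstar := sum_eq_inv_of_equilibrium hcstar.ne' hsum hx
  have hloss := utilityLoss_self c x i Δ (by rw [hS]; positivity) (by rw [hS]; positivity)
  have hothers : ∑ j ∈ univ.erase i, utilityLoss c x i Δ j = c i * Δ / (1 + cstar * Δ) := by
    rw [sum_erase_utilityLoss, hS, hx i]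
    field_simp
    ring
  rw [griefingFactor, hloss, hothers]
  field_simp
  ring

theorem aggregate_griefing_factor_general (n : ℕ) (c : Fin n → ℝ)
    (hc : ∀ i, 0 < c i)
    (cstar : ℝ) (hcstar : cstar = (∑ j, c j) / ((n : ℝ) - 1))
    (hpart : ∀ i, c i < cstar)
    (xstar : Fin n → ℝ) (hx : ∀ i, xstar i = (1 - c i / cstar) / cstar)
    (i : Fin n) (Δ : ℝ) (hΔ : 0 < Δ) :
    (∑ j ∈ Finset.univ.erase i,
        (payoff c xstar j - payoff c (Function.update xstar i (xstar i + Δ)) j))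
      / (payoff c xstar i - payoff c (Function.update xstar i (xstar i + Δ)) i)
      = 1 / (cstar * Δ) ∧
    1 / (cstar * Δ) = ((n : ℝ) - 1) / (Δ * ∑ j, c j) ∧
    (Δ < 1 / cstar →
      1 < (∑ j ∈ Finset.univ.erase i,
        (payoff c xstar j - payoff c (Function.update xstar i (xstar i + Δ)) j))
      / (payoff c xstar i - payoff c (Function.update xstar i (xstar i + Δ)) i)) := by
  have hcstar_pos : 0 < cstar := (hc i).trans (hpart i)
  have hn : (n : ℝ) - 1 ≠ 0 := (div_ne_zero_iff.mp (hcstar ▸ hcstar_pos.ne')).2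
  have hsum : ∑ j, c j = cstar * ((n : ℝ) - 1) := by rw [hcstar, div_mul_cancel₀ _ hn]
  have hGF : griefingFactor c xstar i Δ = 1 / (cstar * Δ) :=
    griefingFactor_of_equilibrium (hc i).ne' hcstar_pos hsum hx hΔ
  refine ⟨hGF, by rw [hsum]; field_simp, fun hsmall => ?_⟩
  show 1 < griefingFactor c xstar i Δ
  rw [hGF]
  exact one_lt_one_div (by positivity) (by rwa [lt_div_iff₀ hcstar_pos, mul_comm] at hsmall)

/-- the aggregate griefing factor of the deviation `x_i* + Δ` from the
Nash equilibrium equals `1/(c*Δ) = (n−1)/(Δ ∑_j c_j)`, and it exceeds `1`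
whenever `Δ < 1/c*`, so the Nash equilibrium is griefable. -/
theorem aggregate_griefing_factor (n : ℕ) (hn : 2 ≤ n) (c : Fin n → ℝ)
    (hc : ∀ i, 0 < c i)
    (cstar : ℝ) (hcstar : cstar = (∑ j, c j) / ((n : ℝ) - 1))
    (hpart : ∀ i, c i < cstar)
    (xstar : Fin n → ℝ) (hx : ∀ i, xstar i = (1 - c i / cstar) / cstar)
    (i : Fin n) (Δ : ℝ) (hΔ : 0 < Δ) :
    (∑ j ∈ Finset.univ.erase i,
        (payoff c xstar j - payoff c (Function.update xstar i (xstar i + Δ)) j))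
      / (payoff c xstar i - payoff c (Function.update xstar i (xstar i + Δ)) i)
      = 1 / (cstar * Δ) ∧
    1 / (cstar * Δ) = ((n : ℝ) - 1) / (Δ * ∑ j, c j) ∧
    (Δ < 1 / cstar →
      1 < (∑ j ∈ Finset.univ.erase i,
        (payoff c xstar j - payoff c (Function.update xstar i (xstar i + Δ)) j))
      / (payoff c xstar i - payoff c (Function.update xstar i (xstar i + Δ)) i)) :=
  aggregate_griefing_factor_general n c hc cstar hcstar hpart xstar hx i Δ hΔ
end

section
/- The total expenditure E(y) = ∑_i c_i y_i at the individually non-griefable allocation y_i = (n/(n−1))x_i* equals n·[1 − (n−1)·(∑_i c_i²)/((∑_i c_i)²)], and satisfies E(y) ≤ 1 with equality if and only if all costs c_i are equal. -/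
open Finset

/-- the total expenditure at the individually non-griefable allocation
`y_i = (n/(n−1)) x_i*` equals `n(1 − (n−1)(∑ c_i²)/(∑ c_i)²)`, is at most `1`,
with equality iff all costs are equal. -/
theorem expenditure_non_griefable (n : ℕ) (hn : 2 ≤ n) (c : Fin n → ℝ)
    (hc : ∀ i, 0 < c i)
    (cstar : ℝ) (hcstar : cstar = (∑ j, c j) / ((n : ℝ) - 1))
    (hpart : ∀ i, c i < cstar)
    (xstar : Fin n → ℝ) (hx : ∀ i, xstar i = (1 - c i / cstar) / cstar)
    (y : Fin n → ℝ) (hy : ∀ i, y i = ((n : ℝ) / ((n : ℝ) - 1)) * xstar i) :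
    (∑ i, c i * y i)
      = (n : ℝ) * (1 - ((n : ℝ) - 1) * (∑ i, (c i) ^ 2) / (∑ i, c i) ^ 2) ∧
    (∑ i, c i * y i) ≤ 1 ∧
    ((∑ i, c i * y i) = 1 ↔ ∀ i j : Fin n, c i = c j) := by
  set S : ℝ := ∑ j, c j with hS
  set Q : ℝ := ∑ i, (c i)^2 with hQ
  have hn1 : (1:ℝ) ≤ (n:ℝ) := by exact_mod_cast Nat.one_le_of_lt hn
  have hn2 : (2:ℝ) ≤ (n:ℝ) := by exact_mod_cast hn
  have hnn1 : (0:ℝ) < (n:ℝ) - 1 := by linarith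
  have hnpos : (0:ℝ) < (n:ℝ) := by linarith
  have hSpos : 0 < S := Finset.sum_pos (fun i _ => hc i) (by
    simp [Finset.univ_nonempty_iff]
    exact Fin.pos_iff_nonempty.mp (by omega))
  have hSne : S ≠ 0 := ne_of_gt hSpos
  -- variance identity
  have hcard : (Finset.univ : Finset (Fin n)).card = n := by simp
  have hvar : ∑ i, (c i - S/(n:ℝ))^2 = Q - S^2/(n:ℝ) := by
    have : ∑ i, (c i - S/(n:ℝ))^2
        = ∑ i, ((c i)^2 - 2*(S/(n:ℝ))*(c i) + (S/(n:ℝ))^2) := by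
      apply Finset.sum_congr rfl; intro i _; ring
    rw [this, Finset.sum_add_distrib, Finset.sum_sub_distrib, ← Finset.mul_sum,
      Finset.sum_const, hcard, nsmul_eq_mul, ← hQ, ← hS]
    field_simp
    ring
  have hvnn : 0 ≤ ∑ i, (c i - S/(n:ℝ))^2 :=
    Finset.sum_nonneg fun i _ => sq_nonneg _
  -- main expenditure formula
  have hE : ∑ i, c i * y i = (n:ℝ) * (1 - ((n:ℝ)-1) * Q / S^2) := by
    have hterm : ∀ i, c i * y i
        = ((n:ℝ)/S) * c i - ((n:ℝ)*((n:ℝ)-1)/S^2) * (c i)^2 := by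
      intro i
      rw [hy, hx, hcstar]
      field_simp
    rw [Finset.sum_congr rfl fun i _ => hterm i, Finset.sum_sub_distrib,
      ← Finset.mul_sum, ← Finset.mul_sum, ← hS, ← hQ]
    field_simp
  -- alternate form via variance
  have hE2 : ∑ i, c i * y i
      = 1 - (((n:ℝ)-1)*(n:ℝ)/S^2) * ∑ i, (c i - S/(n:ℝ))^2 := by
    rw [hE, hvar]
    field_simp
    ring
  have hcoef : 0 < ((n:ℝ)-1)*(n:ℝ)/S^2 := by positivity
  refine ⟨hE, ?_, ?_⟩
  · rw [hE2]; nlinarith [mul_nonneg hcoef.le hvnn]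
  · rw [hE2]
    constructor
    · intro h
      have hz : ∑ i, (c i - S/(n:ℝ))^2 = 0 := by
        have hm : (((n:ℝ)-1)*(n:ℝ)/S^2) * ∑ i, (c i - S/(n:ℝ))^2 = 0 := by linarith
        exact (mul_eq_zero.mp hm).resolve_left (ne_of_gt hcoef)
      have hall : ∀ i ∈ Finset.univ, (c i - S/(n:ℝ))^2 = 0 :=
        (Finset.sum_eq_zero_iff_of_nonneg fun i _ => sq_nonneg _).mp hz
      intro i j
      have hi := pow_eq_zero_iff (n := 2) (by norm_num) |>.mp (hall i (by simp))
      have hj := pow_eq_zero_iff (n := 2) (by norm_num) |>.mp (hall j (by simp))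
      have : c i = S/(n:ℝ) := by linarith [sub_eq_zero.mp hi]
      have hj' : c j = S/(n:ℝ) := by linarith [sub_eq_zero.mp hj]
      rw [this, hj']
    · intro h
      have hz : ∀ i, c i = S/(n:ℝ) := by
        intro i
        have : S = (n:ℝ) * c i := by
          rw [hS]
          rw [Finset.sum_congr rfl fun j _ => h j i]
          simp [hcard]
        rw [this]; field_simp
      have : ∑ i, (c i - S/(n:ℝ))^2 = 0 :=
        Finset.sum_eq_zero fun i _ => by rw [hz i]; ring
      rw [this]; ring
end

section
/- The total expenditure at the Nash equilibrium satisfies E(x*) = ((n−1)/n)·E(y), where y is the unique individually non-griefable allocation with y_i = (n/(n−1))x_i*; hence E(x*) < E(y) ≤ 1. -/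
open Finset

/-- the total expenditure at the Nash equilibrium satisfies
`E(x*) = ((n−1)/n) E(y)` where `y_i = (n/(n−1)) x_i*` is the unique individually
non-griefable allocation; hence `E(x*) < E(y) ≤ 1`. -/
theorem expenditure_nash_vs_non_griefable (n : ℕ) (hn : 2 ≤ n) (c : Fin n → ℝ)
    (hc : ∀ i, 0 < c i)
    (cstar : ℝ) (hcstar : cstar = (∑ j, c j) / ((n : ℝ) - 1))
    (hpart : ∀ i, c i < cstar)
    (xstar : Fin n → ℝ) (hx : ∀ i, xstar i = (1 - c i / cstar) / cstar)
    (y : Fin n → ℝ) (hy : ∀ i, y i = ((n : ℝ) / ((n : ℝ) - 1)) * xstar i) :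
    (∑ i, c i * xstar i) = (((n : ℝ) - 1) / (n : ℝ)) * (∑ i, c i * y i) ∧
    (∑ i, c i * xstar i) < (∑ i, c i * y i) ∧
    (∑ i, c i * y i) ≤ 1 := by
  have hn1 : (1 : ℝ) ≤ (n : ℝ) - 1 := by
    have : (2 : ℝ) ≤ (n : ℝ) := by exact_mod_cast hn
    linarith
  have hnpos : (0 : ℝ) < (n : ℝ) := by linarith
  set S : ℝ := ∑ j, c j with hSdef
  have hS : 0 < S := Finset.sum_pos (fun i _ => hc i) (by simp [Finset.univ_nonempty_iff]; exact Fin.pos_iff_nonempty.mp (by omega))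
  have hcs : 0 < cstar := by rw [hcstar]; positivity
  have hEy : (∑ i, c i * y i) = ((n : ℝ) / ((n : ℝ) - 1)) * ∑ i, c i * xstar i := by
    rw [Finset.mul_sum]
    exact Finset.sum_congr rfl fun i _ => by rw [hy]; ring
  have hExpos : 0 < ∑ i, c i * xstar i := by
    apply Finset.sum_pos (fun i _ => ?_) (Finset.univ_nonempty_iff.mpr (Fin.pos_iff_nonempty.mp (by omega)))
    have h1 : c i / cstar < 1 := (div_lt_one hcs).mpr (hpart i)
    have : 0 < xstar i := by rw [hx]; exact div_pos (by linarith) hcs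
    exact mul_pos (hc i) this
  refine ⟨?_, ?_, ?_⟩
  · rw [hEy]; field_simp
  · rw [hEy]
    have : 1 < (n : ℝ) / ((n : ℝ) - 1) * 1 := by
      rw [mul_one, lt_div_iff₀ (by linarith)]; linarith
    nlinarith
  · set Q : ℝ := ∑ i, (c i) ^ 2 with hQdef
    have hCS : S ^ 2 ≤ (n : ℝ) * Q := by
      have := sq_sum_le_card_mul_sum_sq (s := (Finset.univ : Finset (Fin n))) (f := c)
      simpa [hSdef, hQdef] using this
    have hEx : (∑ i, c i * xstar i) = S / cstar - Q / cstar ^ 2 := by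
      have : ∀ i ∈ (Finset.univ : Finset (Fin n)),
          c i * xstar i = c i / cstar - (c i) ^ 2 / cstar ^ 2 := fun i _ => by
        rw [hx]; field_simp
      rw [Finset.sum_congr rfl this, Finset.sum_sub_distrib, ← Finset.sum_div, ← Finset.sum_div]
    have hcsS : cstar * ((n : ℝ) - 1) = S := by rw [hcstar]; field_simp
    rw [hEy, hEx]
    rw [div_mul_eq_mul_div, div_le_one (by linarith)]
    have hQpos : 0 < Q := Finset.sum_pos (fun i _ => pow_pos (hc i) 2)
      (Finset.univ_nonempty_iff.mpr (Fin.pos_iff_nonempty.mp (by omega)))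
    have h1 : S / cstar = (n : ℝ) - 1 := by
      rw [eq_comm, eq_div_iff (ne_of_gt hcs)]; linarith [hcsS]
    rw [h1]
    have h2 : Q / cstar ^ 2 = Q * ((n : ℝ) - 1) ^ 2 / S ^ 2 := by
      rw [hcstar]; field_simp
    rw [h2]
    have h3 : ((n : ℝ) - 1) ^ 2 / (n : ℝ) ≤ Q * ((n : ℝ) - 1) ^ 2 / S ^ 2 := by
      rw [div_le_div_iff₀ hnpos (by positivity)]
      nlinarith [sq_nonneg ((n : ℝ) - 1)]
    have h4 := mul_le_mul_of_nonneg_left h3 (le_of_lt hnpos)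
    have h5 : (n : ℝ) * (((n : ℝ) - 1) ^ 2 / (n : ℝ)) = ((n : ℝ) - 1) ^ 2 := by
      field_simp
    nlinarith [h4, h5]
end

section
/- If miner i deviates from Nash equilibrium to x_i* + Δ, the maximum Δ before miner i's payoff becomes zero is Δ_i = 1/c_i − 1/c*; that is, Π_i(x_i* + Δ_i, x*_{-i}) = 0 and Π_i(x_i* + Δ, x*_{-i}) > 0 for 0 ≤ Δ < Δ_i. -/
/-!
At equilibrium the total allocation is `X* = 1/c*`, and a deviation `Δ` of miner `i` raises it
to `X* + Δ`, so that `Π_i = (x_i* + Δ) (1/(X* + Δ) - c_i)`. The second factor vanishes exactly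
when `X* + Δ = 1/c_i`, i.e. at `Δ = 1/c_i - 1/c*`, and is positive for smaller `Δ ≥ 0`.
-/

open Finset

theorem Finset.sum_univ_update_add {ι M : Type*} [Fintype ι] [DecidableEq ι] [AddCommGroup M]
    (x : ι → M) (i : ι) (Δ : M) :
    ∑ j, Function.update x i (x i + Δ) j = ∑ j, x j + Δ := by
  rw [sum_update_of_mem (mem_univ i), sdiff_singleton_eq_erase,
    sum_erase_eq_sub (mem_univ i)]
  abel

section Payoff

variable {n : ℕ} (c x : Fin n → ℝ) (i : Fin n)

theorem payoff_eq_mul_inv_sub : payoff c x i = x i * ((∑ j, x j)⁻¹ - c i) := by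
  rw [payoff]
  ring

variable {c x i}

theorem payoff_eq_zero_of_sum_eq (hx : ∑ j, x j = 1 / c i) :
    payoff c x i = 0 := by
  rw [payoff_eq_mul_inv_sub, hx, one_div, inv_inv, sub_self, mul_zero]

theorem payoff_pos_of_sum_lt (hxi : 0 < x i) (hx0 : 0 < ∑ j, x j) (hx : ∑ j, x j < 1 / c i) :
    0 < payoff c x i := by
  rw [payoff_eq_mul_inv_sub]
  rw [one_div] at hx
  have hc : c i < (∑ j, x j)⁻¹ :=
    (lt_inv_comm₀ (inv_pos.mp (hx0.trans hx)) hx0).mpr hx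
  exact mul_pos hxi (sub_pos.mpr hc)

end Payoff

-- For `card ι = 1` the definition of `cstar` divides by zero and gives the junk value `0`.
theorem sum_equilibrium_eq_inv {ι : Type*} [Fintype ι] (c : ι → ℝ) {cstar : ℝ}
    (hcstar : cstar = (∑ j, c j) / ((Fintype.card ι : ℝ) - 1)) (hcstar0 : cstar ≠ 0) :
    ∑ j, (1 - c j / cstar) / cstar = 1 / cstar := by
  have hcard : (Fintype.card ι : ℝ) - 1 ≠ 0 := by
    rintro h
    rw [h, div_zero] at hcstar
    exact hcstar0 hcstar
  have hsum : ∑ j, c j = cstar * ((Fintype.card ι : ℝ) - 1) := by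
    rw [hcstar, div_mul_cancel₀ _ hcard]
  rw [← sum_div, sum_sub_distrib, ← sum_div, hsum, sum_const, card_univ, nsmul_eq_mul]
  field_simp
  ring

theorem breakeven_deviation_general (n : ℕ) (c : Fin n → ℝ)
    (hc : ∀ i, 0 < c i)
    (cstar : ℝ) (hcstar : cstar = (∑ j, c j) / ((n : ℝ) - 1))
    (hpart : ∀ i, c i < cstar)
    (xstar : Fin n → ℝ) (hx : ∀ i, xstar i = (1 - c i / cstar) / cstar)
    (i : Fin n) :
    payoff c (Function.update xstar i (xstar i + (1 / c i - 1 / cstar))) i = 0 ∧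
    ∀ Δ : ℝ, 0 ≤ Δ → Δ < 1 / c i - 1 / cstar →
      0 < payoff c (Function.update xstar i (xstar i + Δ)) i := by
  have hcstar0 : 0 < cstar := (hc i).trans (hpart i)
  have hsum : ∑ j, xstar j = 1 / cstar := by
    simp only [hx]
    exact sum_equilibrium_eq_inv c (by rwa [Fintype.card_fin]) hcstar0.ne'
  have hxi : 0 < xstar i := by
    rw [hx]
    exact div_pos (sub_pos.mpr ((div_lt_one hcstar0).mpr (hpart i))) hcstar0
  constructor
  · refine payoff_eq_zero_of_sum_eq ?_
    rw [Finset.sum_univ_update_add, hsum]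
    ring
  · intro Δ hΔ hΔlt
    refine payoff_pos_of_sum_lt ?_ ?_ ?_ <;>
      simp only [Finset.sum_univ_update_add, Function.update_self, hsum]
    · linarith
    · positivity
    · linarith

/-- the maximum deviation `Δ` before miner `i`'s payoff hits zero is
`Δ_i = 1/c_i − 1/c*`: the payoff vanishes at `Δ_i` and is strictly positive for
`0 ≤ Δ < Δ_i`. -/
theorem breakeven_deviation (n : ℕ) (hn : 2 ≤ n) (c : Fin n → ℝ)
    (hc : ∀ i, 0 < c i)
    (cstar : ℝ) (hcstar : cstar = (∑ j, c j) / ((n : ℝ) - 1))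
    (hpart : ∀ i, c i < cstar)
    (xstar : Fin n → ℝ) (hx : ∀ i, xstar i = (1 - c i / cstar) / cstar)
    (i : Fin n) :
    payoff c (Function.update xstar i (xstar i + (1 / c i - 1 / cstar))) i = 0 ∧
    ∀ Δ : ℝ, 0 ≤ Δ → Δ < 1 / c i - 1 / cstar →
      0 < payoff c (Function.update xstar i (xstar i + Δ)) i :=
  breakeven_deviation_general n c hc cstar hcstar hpart xstar hx i
end

section
/- The aggregate absolute loss L(Δ) = Δc_i/(1 + c*Δ) incurred to all other miners by miner i's deviation x_i* + Δ is strictly increasing in Δ > 0, and its value at Δ_i = 1/c_i − 1/c* equals c_i·x_i*, miner i's Nash equilibrium spending. -/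
open Finset Set

/-- the aggregate loss `L(Δ) = Δ c_i/(1 + c* Δ)` incurred to all other
miners by the deviation `x_i* + Δ` is strictly increasing on `Δ > 0`, and at
`Δ_i = 1/c_i − 1/c*` it equals `c_i x_i*`, miner `i`'s equilibrium spending. -/
theorem network_loss_increasing (n : ℕ) (hn : 2 ≤ n) (c : Fin n → ℝ)
    (hc : ∀ i, 0 < c i)
    (cstar : ℝ) (hcstar : cstar = (∑ j, c j) / ((n : ℝ) - 1))
    (hpart : ∀ i, c i < cstar)
    (xstar : Fin n → ℝ) (hx : ∀ i, xstar i = (1 - c i / cstar) / cstar)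
    (i : Fin n) :
    StrictMonoOn (fun Δ : ℝ => Δ * c i / (1 + cstar * Δ)) (Set.Ioi 0) ∧
    (1 / c i - 1 / cstar) * c i / (1 + cstar * (1 / c i - 1 / cstar))
      = c i * xstar i := by
  have hci := hc i
  have hcs : 0 < cstar := lt_trans hci (hpart i)
  constructor
  · intro a ha b hb hab
    simp only [Set.mem_Ioi] at ha hb
    have hda : 0 < 1 + cstar * a := by positivity
    have hdb : 0 < 1 + cstar * b := by positivity
    rw [div_lt_div_iff₀ hda hdb]
    nlinarith
  · have h1 : 1 + cstar * (1 / c i - 1 / cstar) = cstar / c i := by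
      field_simp; ring
    rw [h1, hx i]
    field_simp
end

section
/- The sample variance σ_c² = (1/(n−1))∑_{i=1}^n (c_i − c̄)² of the per-unit mining costs of active miners satisfies σ_c² < c_max·(n/(n−1) − c_max), where c_max = max_i c_i and c̄ = (1/n)∑_i c_i. -/
open Finset

/-- the sample variance of the per-unit mining costs of active miners
satisfies `σ_c² < c_max (n/(n−1) − c_max)`. -/
theorem variance_bound (n : ℕ) (hn : 2 ≤ n) (c : Fin n → ℝ)
    (hc : ∀ i, 0 < c i) (hc1 : ∀ i, c i < 1)
    (hpart : ∀ i, c i < (∑ j, c j) / ((n : ℝ) - 1))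
    (cmax : ℝ) (hmax : ∀ i, c i ≤ cmax) (hmem : ∃ i, c i = cmax) :
    (1 / ((n : ℝ) - 1)) * ∑ i, (c i - (1 / (n : ℝ)) * ∑ j, c j) ^ 2
      < cmax * ((n : ℝ) / ((n : ℝ) - 1) - cmax) := by
  have hN2 : (2:ℝ) ≤ (n:ℝ) := by exact_mod_cast hn
  set N : ℝ := (n:ℝ) with hNdef
  have hNpos : (0:ℝ) < N := by linarith
  have hN1pos : (0:ℝ) < N - 1 := by linarith
  set S := ∑ j, c j with hSdef
  obtain ⟨i0, hi0⟩ := hmem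
  have hmpos : 0 < cmax := hi0 ▸ hc i0
  have hm1 : cmax < 1 := hi0 ▸ hc1 i0
  have hSgt : (N - 1) * cmax < S := by
    have h := hpart i0
    rw [hi0, lt_div_iff₀ hN1pos] at h
    linarith
  -- expand the variance sum
  have expand : ∑ i, (c i - (1/N) * S) ^ 2 = (∑ i, (c i)^2) - S^2 / N := by
    have h1 : ∀ i ∈ (univ : Finset (Fin n)),
        (c i - (1/N) * S) ^ 2 = (c i)^2 - (2*S/N) * (c i) + (S/N)^2 := by
      intro i _; field_simp; ring
    rw [Finset.sum_congr rfl h1]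
    rw [Finset.sum_add_distrib, Finset.sum_sub_distrib, ← Finset.mul_sum,
      Finset.sum_const, Finset.card_univ, Fintype.card_fin]
    rw [← hSdef, nsmul_eq_mul, ← hNdef]
    field_simp
    ring
  have hsum : ∑ i, (c i - (1/N) * S) ^ 2 ≤ cmax * S - S^2 / N := by
    rw [expand]
    have h2 : ∑ i, (c i)^2 ≤ ∑ i, cmax * c i := by
      apply Finset.sum_le_sum
      intro i _
      have := hmax i
      nlinarith [hc i]
    rw [← Finset.mul_sum, ← hSdef] at h2
    linarith
  have hu : S^2 / N * N = S^2 := div_mul_cancel₀ _ (ne_of_gt hNpos)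
  have key : cmax * S - S^2 / N < cmax * N - (N - 1) * cmax^2 := by
    have key' : N * (cmax * S) - S^2 < N * (cmax * N - (N - 1) * cmax^2) := by
      have h5 : (N^2-1)*cmax < (N^2-1)*1 :=
        mul_lt_mul_of_pos_left hm1 (by nlinarith)
      have h4 : 0 < cmax * (N^2 - (N^2-1)*cmax) := mul_pos hmpos (by linarith)
      nlinarith [h4, sq_nonneg (S - (N-1)*cmax),
        mul_nonneg (mul_nonneg (by linarith : (0:ℝ) ≤ N - 2) hmpos.le)
          (by linarith : (0:ℝ) ≤ S - (N-1)*cmax)]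
    have h3 : N * (cmax * S - S^2 / N) < N * (cmax * N - (N - 1) * cmax^2) := by
      rw [mul_sub, mul_div_cancel₀ _ (ne_of_gt hNpos)]
      linarith
    exact (mul_lt_mul_iff_right₀ hNpos).mp h3
  calc (1 / (N - 1)) * ∑ i, (c i - (1/N) * S) ^ 2
      ≤ (1 / (N - 1)) * (cmax * S - S^2 / N) := by
        apply mul_le_mul_of_nonneg_left hsum (by positivity)
    _ < (1 / (N - 1)) * (cmax * N - (N - 1) * cmax^2) := by
        exact (mul_lt_mul_iff_right₀ (by positivity)).mpr key
    _ = cmax * (N / (N - 1) - cmax) := by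
        field_simp
end

section
/- Bregman bounds for the quasi-CES Shmyrev objective: For the function F(b,w,p) = −∑_i (1/ρ_i) ∑_j b_{ij} ln[v_{ij} b_{ij}^{ρ_i−1}] + ∑_j p_j ln p_j + ∑_i [w_i + ((ρ_i−1)/ρ_i)(K_i − w_i)ln(K_i − w_i)], where p_j = ∑_i b_{ij} and w_i = K_i − ∑_j b_{ij}, the Bregman-type remainder d_F(z', z) := F(z') − F(z) − ⟨∇F(z), z'−z⟩ satisfies 0 ≤ d_F(z', z) ≤ ∑_i (1/ρ_i)·KL(b'_i ‖ b_i), for all feasible z = (b,w,p), z' = (b',w',p') with strictly positive b, b'. Hence F is 1-Bregman convex with respect to the divergence ∑_i (1/ρ_i)KL(b'_i‖b_i). -/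
/-!
Writing `c_i = (1 - ρ_i) / ρ_i`, the `log v_{ij}` terms of `F` are linear and the rest of `F` is
built from `x ↦ x log x`, whose Bregman divergence is the generalized KL divergence. Hence
`d_F(z', z) = ∑_i c_i [KL(b'_i ‖ b_i) - KL(q'_i ‖ q_i)] + KL(p' ‖ p)`, with row sums `q_i` and
column sums `p_j`. By the log-sum inequality each bracket is nonnegative and `KL(p' ‖ p)` is at most
`∑_i KL(b'_i ‖ b_i)`; since `c_i ≥ 0` and `c_i + 1 = 1 / ρ_i`, both bounds follow.
-/

open Finset

/-- Objective of the Shmyrev-type convex program for quasi-CES Fisher markets,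
as a function of spendings `b`, with prices `p_j = ∑_i b_{ij}` and leftover
budgets `w_i = K_i − ∑_j b_{ij}`. -/
noncomputable def Fobj (n m : ℕ) (ρ : Fin n → ℝ) (v : Fin n → Fin m → ℝ)
    (K : Fin n → ℝ) (b : Fin n → Fin m → ℝ) : ℝ :=
  -(∑ i, (1 / ρ i) * ∑ j, b i j * Real.log (v i j * b i j ^ (ρ i - 1)))
    + (∑ j, (∑ i, b i j) * Real.log (∑ i, b i j))
    + ∑ i, ((K i - ∑ j, b i j)
        + ((ρ i - 1) / ρ i) * (∑ j, b i j) * Real.log (∑ j, b i j))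

/-- Inner product `⟨∇F(z), z' − z⟩` at `z = (b, w, p)`, `z' = (b', w', p')`, where
`p, w` (resp. `p', w'`) are determined by `b` (resp. `b'`), using the partial
derivatives of `F` in the independent variables `b, p, w`. -/
noncomputable def gradInner (n m : ℕ) (ρ : Fin n → ℝ) (v : Fin n → Fin m → ℝ)
    (K : Fin n → ℝ) (b b' : Fin n → Fin m → ℝ) : ℝ :=
  (∑ i, ∑ j, (-(1 / ρ i) * (Real.log (v i j * b i j ^ (ρ i - 1)) + (ρ i - 1)))
      * (b' i j - b i j))
    + (∑ j, (Real.log (∑ i, b i j) + 1) * ((∑ i, b' i j) - (∑ i, b i j)))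
    + ∑ i, (1 - ((ρ i - 1) / ρ i) * (Real.log (∑ j, b i j) + 1))
        * ((K i - ∑ j, b' i j) - (K i - ∑ j, b i j))

open Real InformationTheory

noncomputable def klTerm (x y : ℝ) : ℝ := x * log (x / y) - x + y

lemma klTerm_eq_mul_klFun (x : ℝ) {y : ℝ} (hy : 0 < y) : klTerm x y = y * klFun (x / y) := by
  rw [klTerm, klFun_apply]
  field_simp
  ring

lemma klTerm_nonneg {x y : ℝ} (hx : 0 ≤ x) (hy : 0 < y) : 0 ≤ klTerm x y := by
  rw [klTerm_eq_mul_klFun x hy]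
  exact mul_nonneg hy.le (klFun_nonneg (div_nonneg hx hy.le))

/-- Log-sum inequality: Jensen's inequality for the perspective `y * klFun (x / y)`. -/
lemma klTerm_sum_le_sum_klTerm {ι : Type*} {s : Finset ι} {x y : ι → ℝ}
    (hx : ∀ i ∈ s, 0 ≤ x i) (hy : ∀ i ∈ s, 0 < y i) :
    klTerm (∑ i ∈ s, x i) (∑ i ∈ s, y i) ≤ ∑ i ∈ s, klTerm (x i) (y i) := by
  obtain rfl | hs := s.eq_empty_or_nonempty
  · simp [klTerm]
  set Y := ∑ i ∈ s, y i
  have hY : 0 < Y := sum_pos hy hs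
  have jensen := convexOn_klFun.map_sum_le (t := s) (w := fun i => y i / Y)
    (p := fun i => x i / y i) (fun i hi => (div_pos (hy i hi) hY).le)
    (by rw [← sum_div, div_self hY.ne']) (fun i hi => div_nonneg (hx i hi) (hy i hi).le)
  have hmean : ∑ i ∈ s, y i / Y * (x i / y i) = (∑ i ∈ s, x i) / Y := by
    rw [sum_div]
    exact sum_congr rfl fun i hi => by field_simp [(hy i hi).ne']
  simp only [smul_eq_mul, hmean] at jensen
  rw [klTerm_eq_mul_klFun _ hY]
  calc Y * klFun ((∑ i ∈ s, x i) / Y)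
      ≤ Y * ∑ i ∈ s, y i / Y * klFun (x i / y i) := mul_le_mul_of_nonneg_left jensen hY.le
    _ = ∑ i ∈ s, klTerm (x i) (y i) := by
        rw [mul_sum]
        exact sum_congr rfl fun i hi => by
          rw [klTerm_eq_mul_klFun _ (hy i hi)]; field_simp

lemma klTerm_eq_bregman_mul_log {x y : ℝ} (hx : 0 < x) (hy : 0 < y) :
    klTerm x y = x * log x - y * log y - (log y + 1) * (x - y) := by
  rw [klTerm, log_div hx.ne' hy.ne']
  ring

noncomputable def mergeKL {ι κ : Type*} [Fintype ι] [Fintype κ] (c : ι → ℝ) (x y : ι → κ → ℝ) :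
    ℝ :=
  ∑ i, c i * (∑ j, klTerm (x i j) (y i j) - klTerm (∑ j, x i j) (∑ j, y i j))
    + ∑ j, klTerm (∑ i, x i j) (∑ i, y i j)

section mergeKL

variable {ι κ : Type*} [Fintype ι] [Fintype κ] {c : ι → ℝ} {x y : ι → κ → ℝ}

lemma mergeKL_nonneg [Nonempty ι] (hc : ∀ i, 0 ≤ c i) (hx : ∀ i j, 0 ≤ x i j)
    (hy : ∀ i j, 0 < y i j) : 0 ≤ mergeKL c x y := by
  refine add_nonneg (sum_nonneg fun i _ => mul_nonneg (hc i) (sub_nonneg.2 ?_))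
    (sum_nonneg fun j _ => klTerm_nonneg (sum_nonneg fun i _ => hx i j)
      (sum_pos (fun i _ => hy i j) univ_nonempty))
  exact klTerm_sum_le_sum_klTerm (fun j _ => hx i j) (fun j _ => hy i j)

lemma mergeKL_le [Nonempty κ] (hc : ∀ i, 0 ≤ c i) (hx : ∀ i j, 0 ≤ x i j)
    (hy : ∀ i j, 0 < y i j) : mergeKL c x y ≤ ∑ i, (c i + 1) * ∑ j, klTerm (x i j) (y i j) := by
  have rows : ∀ i, c i * (∑ j, klTerm (x i j) (y i j) - klTerm (∑ j, x i j) (∑ j, y i j))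
      ≤ c i * ∑ j, klTerm (x i j) (y i j) := fun i =>
    mul_le_mul_of_nonneg_left (sub_le_self _ (klTerm_nonneg (sum_nonneg fun j _ => hx i j)
      (sum_pos (fun j _ => hy i j) univ_nonempty))) (hc i)
  have columns : ∑ j, klTerm (∑ i, x i j) (∑ i, y i j) ≤ ∑ i, ∑ j, klTerm (x i j) (y i j) :=
    (sum_le_sum fun j _ =>
      klTerm_sum_le_sum_klTerm (fun i _ => hx i j) (fun i _ => hy i j)).trans_eq sum_comm
  simp only [add_mul, one_mul, sum_add_distrib]
  exact add_le_add (sum_le_sum fun i _ => rows i) columns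

end mergeKL

lemma bregman_neg_mul_log_mul_rpow {ρ v x y : ℝ} (hρ : ρ ≠ 0) (hv : 0 < v) (hx : 0 < x)
    (hy : 0 < y) :
    -(1 / ρ) * (x * log (v * x ^ (ρ - 1))) - -(1 / ρ) * (y * log (v * y ^ (ρ - 1)))
      - -(1 / ρ) * (log (v * y ^ (ρ - 1)) + (ρ - 1)) * (x - y) = (1 - ρ) / ρ * klTerm x y := by
  rw [log_mul hv.ne' (rpow_pos_of_pos hx _).ne', log_mul hv.ne' (rpow_pos_of_pos hy _).ne',
    log_rpow hx, log_rpow hy, klTerm_eq_bregman_mul_log hx hy]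
  field_simp
  ring

theorem Fobj_sub_sub_gradInner {n m : ℕ} [NeZero n] [NeZero m] {ρ : Fin n → ℝ}
    {v : Fin n → Fin m → ℝ} (K : Fin n → ℝ) {b b' : Fin n → Fin m → ℝ} (hρ : ∀ i, ρ i ≠ 0)
    (hv : ∀ i j, 0 < v i j) (hb : ∀ i j, 0 < b i j) (hb' : ∀ i j, 0 < b' i j) :
    Fobj n m ρ v K b' - Fobj n m ρ v K b - gradInner n m ρ v K b b' =
      mergeKL (fun i => (1 - ρ i) / ρ i) b' b := by
  have rowSum_pos (b : Fin n → Fin m → ℝ) (hb : ∀ i j, 0 < b i j) (i) : 0 < ∑ j, b i j :=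
    sum_pos (fun j _ => hb i j) univ_nonempty
  have colSum_pos (b : Fin n → Fin m → ℝ) (hb : ∀ i j, 0 < b i j) (j) : 0 < ∑ i, b i j :=
    sum_pos (fun i _ => hb i j) univ_nonempty
  have spending : ∑ i, 1 / ρ i * ∑ j, b i j * log (v i j * b i j ^ (ρ i - 1))
      - ∑ i, 1 / ρ i * ∑ j, b' i j * log (v i j * b' i j ^ (ρ i - 1))
      - ∑ i, ∑ j, -(1 / ρ i) * (log (v i j * b i j ^ (ρ i - 1)) + (ρ i - 1)) * (b' i j - b i j)
      = ∑ i, (1 - ρ i) / ρ i * ∑ j, klTerm (b' i j) (b i j) := by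
    simp only [mul_sum, ← sum_sub_distrib]
    exact sum_congr rfl fun i _ => sum_congr rfl fun j _ => by
      linear_combination bregman_neg_mul_log_mul_rpow (hρ i) (hv i j) (hb' i j) (hb i j)
  have prices : ∑ j, (∑ i, b' i j) * log (∑ i, b' i j) - ∑ j, (∑ i, b i j) * log (∑ i, b i j)
      - ∑ j, (log (∑ i, b i j) + 1) * ((∑ i, b' i j) - ∑ i, b i j)
      = ∑ j, klTerm (∑ i, b' i j) (∑ i, b i j) := by
    rw [← sum_sub_distrib, ← sum_sub_distrib]
    exact sum_congr rfl fun j _ =>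
      (klTerm_eq_bregman_mul_log (colSum_pos b' hb' j) (colSum_pos b hb j)).symm
  have budgets : ∑ i, ((K i - ∑ j, b' i j) + (ρ i - 1) / ρ i * (∑ j, b' i j) * log (∑ j, b' i j))
      - ∑ i, ((K i - ∑ j, b i j) + (ρ i - 1) / ρ i * (∑ j, b i j) * log (∑ j, b i j))
      - ∑ i, (1 - (ρ i - 1) / ρ i * (log (∑ j, b i j) + 1))
          * ((K i - ∑ j, b' i j) - (K i - ∑ j, b i j))
      = -∑ i, (1 - ρ i) / ρ i * klTerm (∑ j, b' i j) (∑ j, b i j) := by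
    simp only [← sum_sub_distrib, ← sum_neg_distrib]
    exact sum_congr rfl fun i _ => by
      linear_combination
        (1 - ρ i) / ρ i * klTerm_eq_bregman_mul_log (rowSum_pos b' hb' i) (rowSum_pos b hb i)
  simp only [mergeKL, mul_sub, sum_sub_distrib]
  unfold Fobj gradInner
  linear_combination spending + prices + budgets

theorem quasiCES_one_Bregman_convex_general (n m : ℕ) (ρ : Fin n → ℝ)
    (hρ : ∀ i, 0 < ρ i ∧ ρ i ≤ 1)
    (v : Fin n → Fin m → ℝ) (hv : ∀ i j, 0 < v i j)
    (K : Fin n → ℝ)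
    (b b' : Fin n → Fin m → ℝ)
    (hb : ∀ i j, 0 < b i j) (hb' : ∀ i j, 0 < b' i j) :
    0 ≤ Fobj n m ρ v K b' - Fobj n m ρ v K b - gradInner n m ρ v K b b' ∧
    Fobj n m ρ v K b' - Fobj n m ρ v K b - gradInner n m ρ v K b b'
      ≤ ∑ i, (1 / ρ i)
          * ∑ j, (b' i j * Real.log (b' i j / b i j) - b' i j + b i j) := by
  obtain rfl | hn := n.eq_zero_or_pos
  · simp [Fobj, gradInner]
  obtain rfl | hm := m.eq_zero_or_pos
  · simp [Fobj, gradInner]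
  have := NeZero.of_pos hn
  have := NeZero.of_pos hm
  have hc i : 0 ≤ (1 - ρ i) / ρ i := div_nonneg (sub_nonneg.2 (hρ i).2) (hρ i).1.le
  have hb'₀ i j : 0 ≤ b' i j := (hb' i j).le
  rw [Fobj_sub_sub_gradInner K (fun i => (hρ i).1.ne') hv hb hb']
  refine ⟨mergeKL_nonneg hc hb'₀ hb, (mergeKL_le hc hb'₀ hb).trans_eq (sum_congr rfl fun i _ => ?_)⟩
  rw [div_add_one (hρ i).1.ne', sub_add_cancel]
  rfl

/-- the Bregman remainder of the quasi-CES Shmyrev objective is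
nonnegative and bounded above by `∑_i (1/ρ_i) KL(b'_i ‖ b_i)`, i.e. `F` is
`1`-Bregman convex w.r.t. this divergence. -/
theorem quasiCES_one_Bregman_convex (n m : ℕ) (ρ : Fin n → ℝ)
    (hρ : ∀ i, 0 < ρ i ∧ ρ i ≤ 1)
    (v : Fin n → Fin m → ℝ) (hv : ∀ i j, 0 < v i j)
    (K : Fin n → ℝ) (hK : ∀ i, 0 < K i)
    (b b' : Fin n → Fin m → ℝ)
    (hb : ∀ i j, 0 < b i j) (hb' : ∀ i j, 0 < b' i j)
    (hfeas : ∀ i, ∑ j, b i j ≤ K i) (hfeas' : ∀ i, ∑ j, b' i j ≤ K i) :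
    0 ≤ Fobj n m ρ v K b' - Fobj n m ρ v K b - gradInner n m ρ v K b b' ∧
    Fobj n m ρ v K b' - Fobj n m ρ v K b - gradInner n m ρ v K b b'
      ≤ ∑ i, (1 / ρ i)
          * ∑ j, (b' i j * Real.log (b' i j / b i j) - b' i j + b i j) :=
  quasiCES_one_Bregman_convex_general n m ρ hρ v hv K b b' hb hb'
end
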